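/- arXiv:1701.05987 — 2 statements merged into one kernel-verified Lean document; each statement's English description precedes it below -/
import Mathlib

section
/- Let G be a subgroup of Homeo₊(ℝ) whose action on ℝ is minimal (every G-orbit is dense in ℝ), and let Z be the centralizer of G in Homeo₊(ℝ). Then every nonidentity element of Z acts freely on ℝ (has no fixed point), and Z is abelian. -/
/-! If `ζ` commutes with `G` and fixes `x`, it fixes the whole `G`-orbit of `x`, hence its closure,
which is `ℝ` by minimality: the centralizer acts freely. A group acting freely by increasing
homeomorphisms of `ℝ` is bi-ordered by comparing images of `0` (by the intermediate value
theorem a comparison at one point holds at every point), and archimedean because an increasing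
fixed-point-free map pushes every point to `+∞`. Hölder's argument then shows that such a group
is abelian: if the commutator `c = (ba)⁻¹ab` exceeded `1`, either `c` is the least element above
`1` and the group is generated by `c`, or some `ε > 1` has `ε² ≤ c`, and squeezing `a` and `b`
between consecutive powers of `ε` gives `ab < ba ε²`. -/

section Holder

variable {G : Type*} [Group G] [LinearOrder G] [MulLeftMono G] [MulRightMono G]

lemma exists_mul_self_le_of_not_isLeast {δ : G} (hδ : 1 < δ) (h : ¬IsLeast {g | 1 < g} δ) :
    ∃ ε, 1 < ε ∧ ε * ε ≤ δ := by
  obtain ⟨ρ, hρ, hρδ⟩ : ∃ ρ, 1 < ρ ∧ ρ < δ := by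
    simpa [IsLeast, hδ, mem_lowerBounds] using h
  by_cases hρρ : ρ * ρ ≤ δ
  · exact ⟨ρ, hρ, hρρ⟩
  -- if `ρ` is too large, its complement `δ * ρ⁻¹` is small enough
  have hlt : δ * ρ⁻¹ < ρ := mul_inv_lt_iff_lt_mul.2 (not_le.1 hρρ)
  refine ⟨δ * ρ⁻¹, lt_mul_inv_iff_lt.2 hρδ, ?_⟩
  calc δ * ρ⁻¹ * (δ * ρ⁻¹) ≤ δ * ρ⁻¹ * ρ := mul_le_mul_right hlt.le _
    _ = δ := inv_mul_cancel_right δ ρ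

-- Mathlib's `MulArchimedean` presupposes commutativity, so the archimedean property
-- is a hypothesis.
variable (harch : ∀ {ε : G}, 1 < ε → ∀ a : G, ∃ n : ℕ, a < ε ^ n)
include harch

lemma exists_zpow_le_lt {ε : G} (hε : 1 < ε) (a : G) :
    ∃ m : ℤ, ε ^ m ≤ a ∧ a < ε ^ (m + 1) := by
  have hmono : StrictMono fun k : ℤ => ε ^ k := strictMono_int_of_lt_succ fun k => by
    rw [zpow_add_one]
    exact lt_mul_of_one_lt_right' _ hε
  obtain ⟨N, hN⟩ := harch hε a
  obtain ⟨N', hN'⟩ := harch hε a⁻¹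
  have hbdd : ∀ k : ℤ, ε ^ k ≤ a → k ≤ N := fun k hk =>
    (hmono.lt_iff_lt.1 (hk.trans_lt (by simpa using hN))).le
  have hlow : ε ^ (-(N' : ℤ)) ≤ a := by
    rw [zpow_neg, zpow_natCast]
    exact (inv_lt'.1 hN').le
  obtain ⟨m, hm, hmax⟩ := Int.exists_greatest_of_bdd ⟨N, hbdd⟩ ⟨_, hlow⟩
  exact ⟨m, hm, lt_of_not_ge fun h => by linarith [hmax _ h]⟩

lemma exists_eq_zpow_of_isLeast {δ : G} (hδ : IsLeast {g | 1 < g} δ) (a : G) :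
    ∃ m : ℤ, a = δ ^ m := by
  obtain ⟨m, hm, hm'⟩ := exists_zpow_le_lt harch hδ.1 a
  have h1 : 1 ≤ (δ ^ m)⁻¹ * a := le_inv_mul_iff_mul_le.2 (by simpa using hm)
  have h2 : (δ ^ m)⁻¹ * a < δ := inv_mul_lt_iff_lt_mul.2 (by rwa [← zpow_add_one])
  have h3 : (δ ^ m)⁻¹ * a = 1 :=
    h1.eq_or_lt.elim Eq.symm fun h => absurd (hδ.2 h) (not_le.2 h2)
  exact ⟨m, (inv_mul_eq_one.1 h3).symm⟩

lemma mul_lt_mul_swap_mul_mul_self {ε : G} (hε : 1 < ε) (a b : G) :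
    a * b < b * a * (ε * ε) := by
  obtain ⟨m, ham, ham'⟩ := exists_zpow_le_lt harch hε a
  obtain ⟨n, hbn, hbn'⟩ := exists_zpow_le_lt harch hε b
  calc a * b < ε ^ (m + 1) * ε ^ (n + 1) := mul_lt_mul_of_lt_of_lt ham' hbn'
    _ = ε ^ n * ε ^ m * (ε * ε) := by group
    _ ≤ b * a * (ε * ε) := mul_le_mul_left (mul_le_mul' hbn ham) _

lemma mul_le_mul_swap_of_archimedean (a b : G) : a * b ≤ b * a := by
  by_contra! hlt
  set c := (b * a)⁻¹ * (a * b)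
  have hc : 1 < c := lt_inv_mul_iff_mul_lt.2 (by rwa [mul_one])
  by_cases hleast : IsLeast {g | 1 < g} c
  · obtain ⟨m, hm⟩ := exists_eq_zpow_of_isLeast harch hleast a
    obtain ⟨n, hn⟩ := exists_eq_zpow_of_isLeast harch hleast b
    rw [hm, hn] at hlt
    exact hlt.ne (Commute.zpow_zpow_self c n m).eq
  · obtain ⟨ε, hε, hεc⟩ := exists_mul_self_le_of_not_isLeast hc hleast
    have := (mul_lt_mul_swap_mul_mul_self harch hε a b).trans_le (mul_le_mul_right hεc _)
    rw [mul_inv_cancel_left] at this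
    exact this.false

theorem mul_comm_of_archimedean (a b : G) : a * b = b * a :=
  le_antisymm (mul_le_mul_swap_of_archimedean harch a b) (mul_le_mul_swap_of_archimedean harch b a)

end Holder

open Equiv

section StrictMonoPerms

variable (α : Type*) [LinearOrder α]

def strictMonoPerms : Subgroup (Perm α) where
  carrier := {ζ | StrictMono ζ}
  one_mem' := strictMono_id
  mul_mem' ha hb := ha.comp hb
  inv_mem' {ζ} hζ x y hxy := by
    rwa [← hζ.lt_iff_lt, Perm.coe_inv, apply_symm_apply, apply_symm_apply]

variable {α}

lemma le_inv_apply_iff {ζ : Perm α} (hζ : ζ ∈ strictMonoPerms α) {x y : α} :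
    x ≤ ζ⁻¹ y ↔ ζ x ≤ y := by
  rw [← hζ.le_iff_le, Perm.coe_inv, apply_symm_apply]

end StrictMonoPerms

lemma exists_lt_iterate_of_forall_lt {α : Type*} [ConditionallyCompleteLinearOrder α]
    [TopologicalSpace α] [OrderTopology α] {f : α → α} (hf : Continuous f)
    (hlt : ∀ x, x < f x) (x M : α) : ∃ n, M < f^[n] x := by
  by_contra! hbdd
  have hmono : Monotone fun n => f^[n] x :=
    monotone_nat_of_le_succ fun n => by
      rw [Function.iterate_succ_apply']
      exact (hlt _).le
  have hconv := tendsto_atTop_ciSup hmono ⟨M, by rintro _ ⟨n, rfl⟩; exact hbdd n⟩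
  exact (hlt _).ne' (isFixedPt_of_tendsto_iterate hconv hf.continuousAt)

lemma injective_apply_of_free {α : Type*} {H : Subgroup (Perm α)}
    (hfree : ∀ h ∈ H, ∀ x, h x = x → h = 1) (x₀ : α) :
    Function.Injective fun h : H => (h : Perm α) x₀ := by
  intro a b hab
  have : ((a⁻¹ * b : H) : Perm α) x₀ = x₀ := by
    simp only [Subgroup.coe_mul, Subgroup.coe_inv, Perm.mul_apply]
    rw [← show (a : Perm α) x₀ = (b : Perm α) x₀ from hab]
    exact symm_apply_apply _ _
  exact inv_mul_eq_one.1 (Subtype.ext (hfree _ (a⁻¹ * b).2 x₀ this))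

section FreeAction

variable {H : Subgroup (Perm ℝ)} (hH : H ≤ strictMonoPerms ℝ)
  (hfree : ∀ h ∈ H, ∀ x, h x = x → h = 1)
include hH hfree

lemma le_apply_of_le_apply {h : Perm ℝ} (hh : h ∈ H) {x₀ : ℝ} (hx₀ : x₀ ≤ h x₀)
    (x : ℝ) : x ≤ h x := by
  by_contra! hx
  have hcont : Continuous fun t => h t - t :=
    ((hH hh).monotone.continuous_of_surjective h.surjective).sub continuous_id
  have hzero : (0 : ℝ) ∈ Set.uIcc (h x₀ - x₀) (h x - x) :=
    Set.mem_uIcc.2 (Or.inr ⟨by linarith, by linarith⟩)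
  obtain ⟨z, -, hz⟩ := intermediate_value_uIcc hcont.continuousOn hzero
  have h1 : h = 1 := hfree h hh z (by linarith)
  simp [h1] at hx

lemma lt_apply_of_lt_apply {h : Perm ℝ} (hh : h ∈ H) {x₀ : ℝ} (hx₀ : x₀ < h x₀)
    (x : ℝ) : x < h x := by
  refine (le_apply_of_le_apply hH hfree hh hx₀.le x).lt_of_ne fun hx => hx₀.ne' ?_
  rw [hfree h hh x hx.symm, Perm.one_apply]

lemma apply_le_apply_of_apply_le {a b : Perm ℝ} (ha : a ∈ H) (hb : b ∈ H) {x₀ : ℝ}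
    (hx₀ : a x₀ ≤ b x₀) (x : ℝ) : a x ≤ b x := by
  have hab : a⁻¹ * b ∈ H := H.mul_mem (H.inv_mem ha) hb
  have key := le_apply_of_le_apply hH hfree hab ((le_inv_apply_iff (hH ha)).2 hx₀) x
  exact (le_inv_apply_iff (hH ha)).1 key

theorem mul_comm_of_free {a b : Perm ℝ} (ha : a ∈ H) (hb : b ∈ H) : a * b = b * a := by
  let _ : LinearOrder H := LinearOrder.lift' _ (injective_apply_of_free hfree 0)
  have : MulLeftMono H := ⟨fun c _ _ hle => (hH c.2).monotone hle⟩
  have : MulRightMono H :=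
    ⟨fun c a b hle => apply_le_apply_of_apply_le hH hfree a.2 b.2 hle ((c : Perm ℝ) 0)⟩
  have harch : ∀ {ε : H}, 1 < ε → ∀ a : H, ∃ n : ℕ, a < ε ^ n := by
    intro ε hε a
    have hlt : ∀ x, x < (ε : Perm ℝ) x :=
      lt_apply_of_lt_apply hH hfree ε.2 (x₀ := 0) hε
    have hcont : Continuous (ε : Perm ℝ) :=
      (hH ε.2).monotone.continuous_of_surjective (ε : Perm ℝ).surjective
    obtain ⟨n, hn⟩ := exists_lt_iterate_of_forall_lt hcont hlt 0 ((a : Perm ℝ) 0)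
    refine ⟨n, show (a : Perm ℝ) 0 < ((ε ^ n : H) : Perm ℝ) 0 from ?_⟩
    rwa [Subgroup.coe_pow, Perm.coe_pow]
  exact congrArg Subtype.val (mul_comm_of_archimedean harch ⟨a, ha⟩ ⟨b, hb⟩)

end FreeAction

lemma eq_one_of_commute_of_dense_orbit {X : Type*} [TopologicalSpace X] [T2Space X]
    {S : Set (Perm X)} {ζ : Perm X} (hζ : Continuous ζ) (hcomm : ∀ g ∈ S, ζ * g = g * ζ)
    {x : X} (hdense : Dense {y | ∃ g ∈ S, g x = y}) (hx : ζ x = x) : ζ = 1 := by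
  have horbit : Set.EqOn ζ id {y | ∃ g ∈ S, g x = y} := by
    rintro _ ⟨g, hg, rfl⟩
    rw [id, ← Perm.mul_apply, hcomm g hg, Perm.mul_apply, hx]
  exact Perm.ext (congrFun (hζ.ext_on hdense continuous_id horbit))

theorem centralizer_of_minimal_action_free_and_abelian_general
    (G : Subgroup (Equiv.Perm ℝ))
    (hmin : ∀ x : ℝ, Dense {y : ℝ | ∃ g ∈ G, g x = y}) :
    (∀ ζ : Equiv.Perm ℝ, StrictMono ⇑ζ → (∀ g ∈ G, ζ * g = g * ζ) → ζ ≠ 1 →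
      ∀ x : ℝ, ζ x ≠ x) ∧
    (∀ ζ η : Equiv.Perm ℝ, StrictMono ⇑ζ → (∀ g ∈ G, ζ * g = g * ζ) →
      StrictMono ⇑η → (∀ g ∈ G, η * g = g * η) → ζ * η = η * ζ) := by
  let Z := Subgroup.centralizer (G : Set (Perm ℝ)) ⊓ strictMonoPerms ℝ
  have mem_Z {ζ : Perm ℝ} (hζ : StrictMono ζ) (hcomm : ∀ g ∈ G, ζ * g = g * ζ) :
      ζ ∈ Z :=
    ⟨Subgroup.mem_centralizer_iff.2 fun g hg => (hcomm g hg).symm, hζ⟩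
  have hfree : ∀ ζ ∈ Z, ∀ x, ζ x = x → ζ = 1 := fun ζ hζ x =>
    eq_one_of_commute_of_dense_orbit (hζ.2.monotone.continuous_of_surjective ζ.surjective)
      (fun g hg => (Subgroup.mem_centralizer_iff.1 hζ.1 g hg).symm) (hmin x)
  exact ⟨fun ζ hζ hcomm hne x hx => hne (hfree ζ (mem_Z hζ hcomm) x hx),
    fun ζ η hζ hζc hη hηc =>
      mul_comm_of_free inf_le_right hfree (mem_Z hζ hζc) (mem_Z hη hηc)⟩

/-- Let `G` be a subgroup of `Homeo₊(ℝ)` (encoded as a subgroup of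
`Equiv.Perm ℝ` all of whose elements are strictly monotone) acting minimally on `ℝ`
(every orbit is dense), and let `Z` be the centralizer of `G` in `Homeo₊(ℝ)`. Then every
nonidentity element of `Z` acts freely on `ℝ`, and `Z` is abelian. -/
theorem centralizer_of_minimal_action_free_and_abelian
    (G : Subgroup (Equiv.Perm ℝ))
    (hmono : ∀ g ∈ G, StrictMono ⇑g)
    (hmin : ∀ x : ℝ, Dense {y : ℝ | ∃ g ∈ G, g x = y}) :
    (∀ ζ : Equiv.Perm ℝ, StrictMono ⇑ζ → (∀ g ∈ G, ζ * g = g * ζ) → ζ ≠ 1 →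
      ∀ x : ℝ, ζ x ≠ x) ∧
    (∀ ζ η : Equiv.Perm ℝ, StrictMono ⇑ζ → (∀ g ∈ G, ζ * g = g * ζ) →
      StrictMono ⇑η → (∀ g ∈ G, η * g = g * η) → ζ * η = η * ζ) :=
  centralizer_of_minimal_action_free_and_abelian_general G hmin
end

section
/- Let Z be a countable abelian subgroup of Homeo₊(ℝ) which acts freely on ℝ (every nonidentity element has no fixed point) and whose action is minimal (every Z-orbit is dense in ℝ). Then Z is topologically conjugate to a group of translations: there exists h ∈ Homeo₊(ℝ) such that for every ζ ∈ Z the map h ∘ ζ ∘ h⁻¹ is a translation x ↦ x + c for some c ∈ ℝ. -/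
/-!
Order `Z` by the position of the orbit point `ζ 0`. Freeness and the intermediate value theorem
force each element to move every point in the same direction, and an element moving points up has
unbounded orbits (a bounded increasing orbit would converge to a fixed point), so `Z` becomes an
archimedean ordered abelian group. Hölder's theorem embeds it into `ℝ` by an order-preserving
homomorphism `τ`, whose image is dense because the orbit of `0` has no least positive point. The
order isomorphism `ζ 0 ↦ τ ζ` between the dense sets `Z • 0` and `τ Z` extends to an increasing
homeomorphism `h` of `ℝ`, and `h (ζ x) = h x + τ ζ` holds on the orbit of `0`, hence everywhere.
-/

open Set Function Equiv

theorem Monotone.surjective_of_denseRange {α β : Type*} [LinearOrder α] [TopologicalSpace α]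
    [OrderTopology α] [PreconnectedSpace α] [LinearOrder β] [TopologicalSpace β] [OrderTopology β]
    [DenselyOrdered β] [NoMinOrder β] [NoMaxOrder β] {f : α → β} (hf : Monotone f)
    (hd : DenseRange f) : Surjective f := by
  intro y
  obtain ⟨a, ha⟩ := exists_lt y
  obtain ⟨b, hb⟩ := exists_gt y
  obtain ⟨_, ⟨x, rfl⟩, hx⟩ := hd.exists_between ha
  obtain ⟨_, ⟨x', rfl⟩, hx'⟩ := hd.exists_between hb
  exact (isPreconnected_range (hf.continuous_of_denseRange hd)).Icc_subset ⟨x, rfl⟩ ⟨x', rfl⟩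
    ⟨hx.2.le, hx'.1.le⟩

theorem exists_orderIso_real_extending {ι : Type*} {o τ : ι → ℝ} (ho : DenseRange o)
    (hτ : DenseRange τ) (hoτ : ∀ i j, o i ≤ o j ↔ τ i ≤ τ j) :
    ∃ e : ℝ ≃o ℝ, ∀ i, e (o i) = τ i := by
  let F : ℝ → ℝ := fun x => sSup (τ '' {i | o i ≤ x})
  have hne : ∀ x, (τ '' {i | o i ≤ x}).Nonempty := fun x => by
    obtain ⟨_, ⟨i, rfl⟩, hi⟩ := ho.exists_between (sub_one_lt x)
    exact ⟨τ i, i, hi.2.le, rfl⟩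
  have hbdd : ∀ x, BddAbove (τ '' {i | o i ≤ x}) := fun x => by
    obtain ⟨_, ⟨j, rfl⟩, hj⟩ := ho.exists_between (lt_add_one x)
    refine ⟨τ j, ?_⟩
    rintro _ ⟨i, hi, rfl⟩
    exact (hoτ i j).1 (hi.trans hj.1.le)
  have hF : ∀ i, F (o i) = τ i := fun i =>
    IsGreatest.csSup_eq ⟨⟨i, le_refl (o i), rfl⟩, by rintro _ ⟨j, hj, rfl⟩; exact (hoτ j i).1 hj⟩
  have hFmono : Monotone F := fun x y hxy =>
    csSup_le_csSup (hbdd y) (hne x) (image_mono fun i hi => le_trans hi hxy)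
  have hFstrict : StrictMono F := by
    intro x y hxy
    obtain ⟨_, ⟨i, rfl⟩, hi⟩ := ho.exists_between hxy
    obtain ⟨_, ⟨j, rfl⟩, hj⟩ := ho.exists_between hi.2
    calc F x ≤ F (o i) := hFmono hi.1.le
      _ = τ i := hF i
      _ < τ j := (lt_iff_lt_of_le_iff_le (hoτ j i)).1 hj.1
      _ = F (o j) := (hF j).symm
      _ ≤ F y := hFmono hj.2.le
  have hFsurj : Surjective F :=
    hFmono.surjective_of_denseRange (hτ.mono (range_subset_iff.2 fun i => ⟨o i, hF i⟩))
  exact ⟨hFstrict.orderIsoOfSurjective F hFsurj, hF⟩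

theorem Continuous.forall_lt_apply_of_lt_apply {f : ℝ → ℝ} (hf : Continuous f)
    (hfix : ∀ x, f x ≠ x) {a : ℝ} (ha : a < f a) (x : ℝ) : x < f x := by
  by_contra! hx
  obtain ⟨z, hz⟩ := (isPreconnected_range (hf.sub continuous_id)).Icc_subset ⟨x, rfl⟩ ⟨a, rfl⟩
    ⟨sub_nonpos.2 hx, (sub_pos.2 ha).le⟩
  exact hfix z (sub_eq_zero.1 hz)

theorem Continuous.not_bddAbove_range_iterate {α : Type*} [ConditionallyCompleteLinearOrder α]
    [TopologicalSpace α] [OrderTopology α] {f : α → α} (hf : Continuous f) (hlt : ∀ x, x < f x)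
    (a : α) : ¬BddAbove (range fun n => f^[n] a) := by
  intro hbdd
  have hmono : Monotone fun n => f^[n] a := monotone_nat_of_le_succ fun n => by
    rw [iterate_succ_apply']
    exact (hlt _).le
  exact (hlt _).ne' (isFixedPt_of_tendsto_iterate (tendsto_atTop_ciSup hmono hbdd) hf.continuousAt)

section OrbitOrder

variable {Z : Subgroup (Perm ℝ)}

theorem injective_apply_of_free_s17 (hfree : ∀ ζ ∈ Z, ζ ≠ 1 → ∀ x : ℝ, ζ x ≠ x) (x : ℝ) :
    Injective fun g : Z => (g : Perm ℝ) x := by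
  intro g h hgh
  by_contra hne
  refine hfree _ (g⁻¹ * h).2 (fun h1 => hne (inv_mul_eq_one.1 (Subtype.ext h1))) x ?_
  simp [Perm.mul_apply, ← hgh]

theorem exists_le_pow_apply_zero (hmono : ∀ ζ ∈ Z, StrictMono ⇑ζ)
    (hfree : ∀ ζ ∈ Z, ζ ≠ 1 → ∀ x : ℝ, ζ x ≠ x) {g : Z} (hg : 0 < (g : Perm ℝ) 0) (B : ℝ) :
    ∃ n : ℕ, B ≤ ((g ^ n : Z) : Perm ℝ) 0 := by
  have hcont : Continuous (g : Perm ℝ) := (hmono g g.2).monotone.continuous_of_surjective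
    (g : Perm ℝ).surjective
  have hg1 : (g : Perm ℝ) ≠ 1 := fun h => hg.ne' (by simp [h])
  have hlt := hcont.forall_lt_apply_of_lt_apply (hfree g g.2 hg1) hg
  obtain ⟨_, ⟨n, rfl⟩, hn⟩ := not_bddAbove_iff.1 (hcont.not_bddAbove_range_iterate hlt 0) B
  exact ⟨n, by simpa [Perm.iterate_eq_pow] using hn.le⟩

theorem exists_addMonoidHom_real_orbit_order (hmono : ∀ ζ ∈ Z, StrictMono ⇑ζ)
    (habel : ∀ ζ ∈ Z, ∀ η ∈ Z, ζ * η = η * ζ) (hfree : ∀ ζ ∈ Z, ζ ≠ 1 → ∀ x : ℝ, ζ x ≠ x) :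
    ∃ τ : Additive Z →+ ℝ,
      ∀ g h : Z, (g : Perm ℝ) 0 ≤ (h : Perm ℝ) 0 ↔ τ (.ofMul g) ≤ τ (.ofMul h) := by
  let : LinearOrder Z := LinearOrder.lift' _ (injective_apply_of_free_s17 hfree 0)
  let : CommGroup Z := { mul_comm := fun g h => Subtype.ext (habel g g.2 h h.2) }
  have : IsOrderedMonoid Z :=
    { mul_le_mul_left := fun g h hgh k => by
        rw [mul_comm g, mul_comm h]
        exact (hmono k k.2).monotone hgh }
  have : MulArchimedean Z := ⟨fun g h hh => exists_le_pow_apply_zero hmono hfree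
    (by simpa using show (1 : Z).1 0 < h.1 0 from hh) (g.1 0)⟩
  obtain ⟨τ, hτ⟩ := Archimedean.exists_orderAddMonoidHom_real_injective (Additive Z)
  exact ⟨τ, fun g h => ((OrderHomClass.mono τ).strictMono_of_injective hτ).le_iff_le.symm⟩

theorem denseRange_of_orbit_order {τ : Additive Z →+ ℝ}
    (hτ : ∀ g h : Z, (g : Perm ℝ) 0 ≤ (h : Perm ℝ) 0 ↔ τ (.ofMul g) ≤ τ (.ofMul h))
    (horbit : DenseRange fun g : Z => (g : Perm ℝ) 0) :
    DenseRange fun g : Z => τ (.ofMul g) := by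
  have hpos : ∀ g : Z, 0 < (g : Perm ℝ) 0 ↔ 0 < τ (.ofMul g) := fun g => by
    simpa using lt_iff_lt_of_le_iff_le (hτ g 1)
  have hrange : (τ.range : Set ℝ) = range fun g : Z => τ (.ofMul g) := by
    rw [AddMonoidHom.coe_range]
    exact (Additive.ofMul.surjective.range_comp _).symm
  rw [DenseRange, ← hrange]
  refine τ.range.dense_of_no_min ?_ ?_
  · obtain ⟨_, ⟨g, rfl⟩, hg⟩ := horbit.exists_between zero_lt_one
    exact (AddSubgroup.ne_bot_iff_exists_ne_zero).2
      ⟨⟨_, g, rfl⟩, fun h => ((hpos g).1 hg.1).ne' (congrArg Subtype.val h)⟩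
  · rintro ⟨_, ⟨⟨g, rfl⟩, hg⟩, hleast⟩
    obtain ⟨_, ⟨h, rfl⟩, hh⟩ := horbit.exists_between ((hpos g.toMul).2 hg)
    exact (lt_iff_lt_of_le_iff_le (hτ g.toMul h)).1 hh.2 |>.not_ge
      (hleast ⟨⟨.ofMul h, rfl⟩, (hpos h).1 hh.1⟩)

theorem apply_apply_eq_add_of_orbit {e : ℝ ≃o ℝ} {τ : Additive Z →+ ℝ}
    (hmono : ∀ ζ ∈ Z, StrictMono ⇑ζ) (he : ∀ g : Z, e ((g : Perm ℝ) 0) = τ (.ofMul g))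
    (horbit : DenseRange fun g : Z => (g : Perm ℝ) 0) (g : Z) (x : ℝ) :
    e ((g : Perm ℝ) x) = e x + τ (.ofMul g) := by
  have hcont : Continuous (g : Perm ℝ) := (hmono g g.2).monotone.continuous_of_surjective
    (g : Perm ℝ).surjective
  refine congrFun (Continuous.ext_on horbit (e.continuous.comp hcont)
    (e.continuous.add continuous_const) ?_) x
  rintro _ ⟨h, rfl⟩
  have := he (g * h)
  simp only [Subgroup.coe_mul, Perm.mul_apply, ofMul_mul, map_add] at this
  show e ((g : Perm ℝ) ((h : Perm ℝ) 0)) = e ((h : Perm ℝ) 0) + τ (.ofMul g)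
  rw [this, he h, add_comm]

end OrbitOrder

theorem free_minimal_abelian_group_conjugate_to_translations_general
    (Z : Subgroup (Equiv.Perm ℝ))
    (hmono : ∀ ζ ∈ Z, StrictMono ⇑ζ)
    (habel : ∀ ζ ∈ Z, ∀ η ∈ Z, ζ * η = η * ζ)
    (hfree : ∀ ζ ∈ Z, ζ ≠ 1 → ∀ x : ℝ, ζ x ≠ x)
    (hmin : ∀ x : ℝ, Dense {y : ℝ | ∃ ζ ∈ Z, ζ x = y}) :
    ∃ h : Equiv.Perm ℝ, StrictMono ⇑h ∧
      ∀ ζ ∈ Z, ∃ c : ℝ, ∀ x : ℝ, h (ζ (h.symm x)) = x + c := by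
  have horbit : DenseRange fun g : Z => (g : Perm ℝ) 0 := by
    rw [DenseRange, show range (fun g : Z => (g : Perm ℝ) 0) = {y | ∃ ζ ∈ Z, ζ 0 = y} by
      ext; simp]
    exact hmin 0
  obtain ⟨τ, hτ⟩ := exists_addMonoidHom_real_orbit_order hmono habel hfree
  obtain ⟨e, he⟩ := exists_orderIso_real_extending horbit (denseRange_of_orbit_order hτ horbit) hτ
  refine ⟨e.toEquiv, e.strictMono, fun ζ hζ => ⟨τ (.ofMul ⟨ζ, hζ⟩), fun x => ?_⟩⟩
  simpa using apply_apply_eq_add_of_orbit hmono he horbit ⟨ζ, hζ⟩ (e.symm x)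

/-- A countable abelian subgroup `Z` of `Homeo₊(ℝ)` (encoded as a
subgroup of `Equiv.Perm ℝ` all of whose elements are strictly monotone) acting freely and
minimally on `ℝ` is topologically conjugate to a group of translations: there is an
orientation-preserving homeomorphism `h` of `ℝ` such that each `h ∘ ζ ∘ h⁻¹`, `ζ ∈ Z`,
is a translation `x ↦ x + c`. -/
theorem free_minimal_abelian_group_conjugate_to_translations
    (Z : Subgroup (Equiv.Perm ℝ)) [Countable ↥Z]
    (hmono : ∀ ζ ∈ Z, StrictMono ⇑ζ)
    (habel : ∀ ζ ∈ Z, ∀ η ∈ Z, ζ * η = η * ζ)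
    (hfree : ∀ ζ ∈ Z, ζ ≠ 1 → ∀ x : ℝ, ζ x ≠ x)
    (hmin : ∀ x : ℝ, Dense {y : ℝ | ∃ ζ ∈ Z, ζ x = y}) :
    ∃ h : Equiv.Perm ℝ, StrictMono ⇑h ∧
      ∀ ζ ∈ Z, ∃ c : ℝ, ∀ x : ℝ, h (ζ (h.symm x)) = x + c :=
  free_minimal_abelian_group_conjugate_to_translations_general Z hmono habel hfree hmin
end
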